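/- arXiv:2409.14675 — 3 statements merged into one kernel-verified Lean document; each statement's English description precedes it below -/
import Mathlib

section
/- For every s > 0, q ∈ (0,1) and R > 0, the function g : ℝ → ℝ defined by g(u) = σ_{s,q}((R² − u)³) for u < R² and g(u) = 0 for u ≥ R² is twice continuously differentiable on ℝ. (Consequently, each smoothed adjacency entry x ↦ \bar a_{ij}(x), obtained by evaluating g at the squared inter-robot distance, is twice continuously differentiable in the robots' positions.) -/
/-!
Since `σ_{s,q}(0) = 0`, the function equals `u ↦ σ_{s,q}(max (R² - u) 0 ^ 3)`: the smooth sigmoid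
composed with the truncated power `x ↦ max x 0 ^ 3`. A truncated power `max x 0 ^ (k + 1)` is `C^k`,
by induction on `k`, because its derivative is `(k + 1) * max x 0 ^ k`.
-/

/-- The parametrized sigmoid function σ_{s,q}(y) = (1+q)/(1 + q⁻¹ e^{-s y}) − q. -/
noncomputable def sigmaFn (s q y : ℝ) : ℝ :=
  (1 + q) / (1 + q⁻¹ * Real.exp (-(s * y))) - q

open Asymptotics Topology

lemma hasDerivAt_max_zero_pow {n : ℕ} (hn : 2 ≤ n) (x : ℝ) :
    HasDerivAt (fun y : ℝ => max y 0 ^ n) (n * max x 0 ^ (n - 1)) x := by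
  rcases lt_trichotomy x 0 with hx | rfl | hx
  · have hzero : (fun y : ℝ => max y 0 ^ n) =ᶠ[𝓝 x] fun _ => 0 := by
      filter_upwards [Iio_mem_nhds hx] with y hy
      rw [max_eq_right (le_of_lt hy), zero_pow (by omega)]
    rw [max_eq_right hx.le, zero_pow (by omega), mul_zero]
    exact (hasDerivAt_const x 0).congr_of_eventuallyEq hzero
  · have hbound : (fun y : ℝ => max y 0 ^ n) =O[𝓝 0] fun y => y ^ n :=
      IsBigO.of_bound 1 <| Filter.Eventually.of_forall fun y => by
        rw [one_mul, norm_pow, norm_pow]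
        refine pow_le_pow_left₀ (norm_nonneg _) ?_ n
        rcases le_total y 0 with h | h <;> simp [h]
    rw [max_self, zero_pow (by omega), mul_zero, hasDerivAt_iff_isLittleO]
    simpa [zero_pow (by omega : n ≠ 0)] using hbound.trans_isLittleO (isLittleO_pow_id hn)
  · have hpow : (fun y : ℝ => max y 0 ^ n) =ᶠ[𝓝 x] fun y => y ^ n := by
      filter_upwards [Ioi_mem_nhds hx] with y hy
      rw [max_eq_left (le_of_lt hy)]
    rw [max_eq_left hx.le]
    exact (hasDerivAt_pow n x).congr_of_eventuallyEq hpow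

lemma contDiff_max_zero_pow_succ (k : ℕ) : ContDiff ℝ k (fun x : ℝ => max x 0 ^ (k + 1)) := by
  induction k with
  | zero => simpa using continuous_id.max continuous_const
  | succ k ih =>
    have hderiv := hasDerivAt_max_zero_pow (n := k + 2) (by omega)
    have hderiv_eq : deriv (fun x : ℝ => max x 0 ^ (k + 2)) =
        fun x => ((k + 2 : ℕ) : ℝ) * max x 0 ^ (k + 1) :=
      funext fun x => (hderiv x).deriv
    rw [Nat.cast_succ, contDiff_succ_iff_deriv, hderiv_eq]
    exact ⟨fun x => (hderiv x).differentiableAt, by simp, contDiff_const.mul ih⟩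

lemma sigmaFn_zero {s q : ℝ} (hq : 0 < q) : sigmaFn s q 0 = 0 := by
  rw [sigmaFn, mul_zero, neg_zero, Real.exp_zero, mul_one]
  field_simp
  ring

lemma contDiff_sigmaFn {s q : ℝ} (hq : 0 ≤ q) {n : WithTop ℕ∞} : ContDiff ℝ n (sigmaFn s q) := by
  have hden : ∀ y, 1 + q⁻¹ * Real.exp (-(s * y)) ≠ 0 := fun y => by positivity
  unfold sigmaFn
  fun_prop (disch := exact hden _)

theorem stmt_4_general (s q R : ℝ) (hq0 : 0 < q) :
    ContDiff ℝ 2 (fun u : ℝ => if u < R ^ 2 then sigmaFn s q ((R ^ 2 - u) ^ 3) else 0) := by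
  have htruncate : (fun u : ℝ => if u < R ^ 2 then sigmaFn s q ((R ^ 2 - u) ^ 3) else 0) =
      fun u => sigmaFn s q (max (R ^ 2 - u) 0 ^ 3) := by
    funext u
    split_ifs with h
    · rw [max_eq_left (sub_pos.2 h).le]
    · rw [max_eq_right (sub_nonpos.2 (not_lt.1 h)), zero_pow three_ne_zero, sigmaFn_zero hq0]
  rw [htruncate]
  exact (contDiff_sigmaFn hq0.le).comp
    ((contDiff_max_zero_pow_succ 2).comp (contDiff_const.sub contDiff_id))

theorem stmt_4 (s q R : ℝ) (hs : 0 < s) (hq0 : 0 < q) (hq1 : q < 1) (hR : 0 < R) :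
    ContDiff ℝ 2 (fun u : ℝ => if u < R ^ 2 then sigmaFn s q ((R ^ 2 - u) ^ 3) else 0) :=
  stmt_4_general s q R hq0
end

section
/- (Lemma 1) Let G = (V,E) be a finite undirected simple graph, L ⊆ V nonempty, and r a positive integer. Then L percolates G with threshold r if and only if G is strongly r-robust with respect to L. -/
/-- Bootstrap percolation: active sets `A_0 = L`,
`A_{k+1} = A_k ∪ { j : |N(j) ∩ A_k| ≥ r }`. -/
def bpActive {V : Type*} [Fintype V] [DecidableEq V] (G : SimpleGraph V)
    [DecidableRel G.Adj] (L : Finset V) (r : ℕ) : ℕ → Finset V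
  | 0 => L
  | k + 1 =>
      bpActive G L r k ∪
        Finset.univ.filter (fun j => r ≤ ((G.neighborFinset j) ∩ bpActive G L r k).card)

/-- `G` is strongly `r`-robust with respect to `L` if every nonempty subset `S ⊆ V \ L`
is `r`-reachable, i.e. some `i ∈ S` has at least `r` neighbors outside of `S`. -/
def StronglyRRobust {V : Type*} [Fintype V] [DecidableEq V] (G : SimpleGraph V)
    [DecidableRel G.Adj] (L : Finset V) (r : ℕ) : Prop :=
  ∀ S : Finset V, S ⊆ Lᶜ → S.Nonempty → ∃ i ∈ S, r ≤ (G.neighborFinset i \ S).card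

private lemma bp_L_subset {V : Type*} [Fintype V] [DecidableEq V] (G : SimpleGraph V)
    [DecidableRel G.Adj] (L : Finset V) (r : ℕ) : ∀ k, L ⊆ bpActive G L r k := by
  intro k
  induction k with
  | zero => exact Finset.Subset.refl _
  | succ k ih => exact ih.trans Finset.subset_union_left

theorem stmt_7 {V : Type*} [Fintype V] [DecidableEq V] (G : SimpleGraph V)
    [DecidableRel G.Adj] (L : Finset V) (hL : L.Nonempty) (r : ℕ) (hr : 0 < r) :
    (∃ k : ℕ, bpActive G L r k = Finset.univ) ↔ StronglyRRobust G L r := by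
  constructor
  · rintro ⟨K, hK⟩ S hSL hS
    have hex : ∃ k, (S ∩ bpActive G L r k).Nonempty := ⟨K, by rwa [hK, Finset.inter_univ]⟩
    classical
    let k := Nat.find hex
    have hk : (S ∩ bpActive G L r k).Nonempty := Nat.find_spec hex
    have hk0 : k ≠ 0 := by
      intro h
      obtain ⟨x, hx⟩ := hk
      rw [h] at hx
      simp only [bpActive, Finset.mem_inter] at hx
      exact (Finset.mem_compl.mp (hSL hx.1)) hx.2
    obtain ⟨m, hm⟩ : ∃ m, k = m + 1 := ⟨k - 1, (Nat.succ_pred_eq_of_pos (Nat.pos_of_ne_zero hk0)).symm⟩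
    have hmlt : ¬ (S ∩ bpActive G L r m).Nonempty := Nat.find_min hex (by omega)
    have hmempty : S ∩ bpActive G L r m = ∅ := Finset.not_nonempty_iff_eq_empty.mp hmlt
    obtain ⟨i, hi⟩ := hk
    rw [hm] at hi
    simp only [bpActive, Finset.mem_inter, Finset.mem_union, Finset.mem_filter,
      Finset.mem_univ, true_and] at hi
    obtain ⟨hiS, hi2⟩ := hi
    have hinotm : i ∉ bpActive G L r m := by
      intro h
      exact hmlt ⟨i, Finset.mem_inter.mpr ⟨hiS, h⟩⟩
    have hfilter : r ≤ ((G.neighborFinset i) ∩ bpActive G L r m).card := by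
      rcases hi2 with h | h
      · exact absurd h hinotm
      · exact h
    refine ⟨i, hiS, le_trans hfilter (Finset.card_le_card ?_)⟩
    intro x hx
    rw [Finset.mem_inter] at hx
    rw [Finset.mem_sdiff]
    refine ⟨hx.1, fun hxS => ?_⟩
    have : x ∈ S ∩ bpActive G L r m := Finset.mem_inter.mpr ⟨hxS, hx.2⟩
    rw [hmempty] at this
    exact absurd this (Finset.notMem_empty x)
  · intro hrob
    have key : ∀ k, bpActive G L r k = Finset.univ ∨ k + 1 ≤ (bpActive G L r k).card := by
      intro k
      induction k with
      | zero =>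
        by_cases h : bpActive G L r 0 = Finset.univ
        · exact Or.inl h
        · exact Or.inr (Finset.card_pos.mpr hL)
      | succ k ih =>
        by_cases hu : bpActive G L r k = Finset.univ
        · left
          refine Finset.univ_subset_iff.mp ?_
          rw [← hu]
          exact Finset.subset_union_left
        · rcases ih with h | h
          · exact absurd h hu
          · right
            -- find a new vertex
            have hS : ((bpActive G L r k)ᶜ : Finset V).Nonempty := by
              rw [← Finset.card_pos, Finset.card_compl]
              have := Finset.card_lt_card ((Finset.subset_univ _).ssubset_of_ne hu)
              rw [Finset.card_univ] at this
              omega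
            have hSL : ((bpActive G L r k)ᶜ : Finset V) ⊆ Lᶜ :=
              Finset.compl_subset_compl.mpr (bp_L_subset G L r k)
            obtain ⟨i, hiS, hir⟩ := hrob _ hSL hS
            have hinot : i ∉ bpActive G L r k := Finset.mem_compl.mp hiS
            have hnew : i ∈ bpActive G L r (k+1) := by
              simp only [bpActive, Finset.mem_union, Finset.mem_filter, Finset.mem_univ, true_and]
              right
              refine le_trans hir (Finset.card_le_card ?_)
              intro x hx
              rw [Finset.mem_sdiff, Finset.mem_compl, not_not] at hx
              exact Finset.mem_inter.mpr hx
            have hsub : insert i (bpActive G L r k) ⊆ bpActive G L r (k+1) := by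
              refine Finset.insert_subset hnew ?_
              exact Finset.subset_union_left
            have h1 : (bpActive G L r k).card + 1 ≤ (bpActive G L r (k+1)).card := by
              rw [← Finset.card_insert_of_notMem hinot]
              exact Finset.card_le_card hsub
            omega
    refine ⟨Fintype.card V, ?_⟩
    rcases key (Fintype.card V) with h | h
    · exact h
    · have := Finset.card_le_univ (bpActive G L r (Fintype.card V))
      exfalso
      omega
end

section
/- (Corollary 1) Let G = (V,E) be a finite undirected simple graph, L ⊆ V nonempty with follower set F = V \ L, and r a positive integer. Then the bootstrap percolation process with threshold r and initial active set L activates every follower (i.e., F ⊆ A_{|F|}) if and only if G is strongly r-robust with respect to L. -/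
/-!
A vertex outside the active set `A` is activated in the next round exactly when it witnesses
the `r`-reachability of `Aᶜ`. Hence if some nonempty set of followers `S` is not `r`-reachable,
no vertex of `S` is ever activated, its active neighbours all lying outside `S`. Conversely,
under strong robustness every round before saturation activates a new follower, so `|F|`
rounds activate them all.
-/

open Finset

namespace bpActive

variable {V : Type*} [Fintype V] [DecidableEq V] (G : SimpleGraph V) [DecidableRel G.Adj]
  (L : Finset V) (r : ℕ)

theorem mem_succ {j : V} {k : ℕ} :
    j ∈ bpActive G L r (k + 1) ↔
      j ∈ bpActive G L r k ∨ r ≤ #(G.neighborFinset j ∩ bpActive G L r k) := by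
  simp [bpActive]

theorem monotone : Monotone (bpActive G L r) :=
  monotone_nat_of_le_succ fun _ _ hj => (mem_succ G L r).2 (Or.inl hj)

theorem self_subset (k : ℕ) : L ⊆ bpActive G L r k :=
  monotone G L r (Nat.zero_le k)

theorem disjoint_of_forall_card_lt {S : Finset V} (hSL : Disjoint L S)
    (hS : ∀ i ∈ S, #(G.neighborFinset i \ S) < r) (k : ℕ) :
    Disjoint (bpActive G L r k) S := by
  induction k with
  | zero => exact hSL
  | succ n ih =>
    refine disjoint_left.2 fun j hj hjS => ?_
    rcases (mem_succ G L r).1 hj with hj | hj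
    · exact disjoint_left.1 ih hj hjS
    · have hnbr : G.neighborFinset j ∩ bpActive G L r n ⊆ G.neighborFinset j \ S :=
        fun x hx => mem_sdiff.2 ⟨(mem_inter.1 hx).1, disjoint_left.1 ih (mem_inter.1 hx).2⟩
      exact (hS j hjS).not_ge (hj.trans (card_le_card hnbr))

variable {G L r}

theorem sdiff_ssubset_succ (hrob : StronglyRRobust G L r) {k : ℕ}
    (hk : bpActive G L r k ≠ univ) :
    bpActive G L r k \ L ⊂ bpActive G L r (k + 1) \ L := by
  obtain ⟨i, hiA, hir⟩ := hrob (bpActive G L r k)ᶜ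
    (compl_subset_compl.2 (self_subset G L r k))
    (by rwa [← compl_ne_univ_iff_nonempty, compl_compl])
  rw [mem_compl] at hiA
  rw [sdiff_compl, inf_eq_inter] at hir
  have hi_succ : i ∈ bpActive G L r (k + 1) := (mem_succ G L r).2 (Or.inr hir)
  have hiL : i ∉ L := fun hiL => hiA (self_subset G L r k hiL)
  refine (ssubset_iff_of_subset (sdiff_subset_sdiff (monotone G L r k.le_succ) le_rfl)).2
    ⟨i, mem_sdiff.2 ⟨hi_succ, hiL⟩, fun hi => hiA (mem_sdiff.1 hi).1⟩

theorem min_le_card_sdiff (hrob : StronglyRRobust G L r) (k : ℕ) :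
    min k #Lᶜ ≤ #(bpActive G L r k \ L) := by
  induction k with
  | zero => exact (min_le_left _ _).trans (Nat.zero_le _)
  | succ n ih =>
    by_cases hn : bpActive G L r n = univ
    · have hsucc : bpActive G L r (n + 1) = univ :=
        univ_subset_iff.1 (hn ▸ monotone G L r n.le_succ)
      rw [hsucc, ← compl_eq_univ_sdiff L]
      exact min_le_right _ _
    · have hlt := card_lt_card (sdiff_ssubset_succ hrob hn)
      omega

theorem compl_subset_of_stronglyRRobust (hrob : StronglyRRobust G L r) :
    Lᶜ ⊆ bpActive G L r #Lᶜ := by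
  have hcard := min_le_card_sdiff hrob #Lᶜ
  rw [min_self] at hcard
  have hsub : bpActive G L r #Lᶜ \ L ⊆ Lᶜ := fun x hx => mem_compl.2 (mem_sdiff.1 hx).2
  calc Lᶜ = bpActive G L r #Lᶜ \ L := (eq_of_subset_of_card_le hsub hcard).symm
    _ ⊆ bpActive G L r #Lᶜ := sdiff_subset

end bpActive

theorem stmt_8_general {V : Type*} [Fintype V] [DecidableEq V] (G : SimpleGraph V)
    [DecidableRel G.Adj] (L : Finset V) (r : ℕ) :
    (Lᶜ : Finset V) ⊆ bpActive G L r (Lᶜ : Finset V).card ↔ StronglyRRobust G L r := by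
  refine ⟨fun hbp S hSL hS => ?_, bpActive.compl_subset_of_stronglyRRobust⟩
  by_contra! hcon
  obtain ⟨i, hi⟩ := hS
  have hdisj := bpActive.disjoint_of_forall_card_lt G L r
    (disjoint_left.2 fun _ hx hxS => mem_compl.1 (hSL hxS) hx) hcon #Lᶜ
  exact disjoint_left.1 hdisj (hbp (hSL hi)) hi

theorem stmt_8 {V : Type*} [Fintype V] [DecidableEq V] (G : SimpleGraph V)
    [DecidableRel G.Adj] (L : Finset V) (hL : L.Nonempty) (r : ℕ) (hr : 0 < r) :
    (Lᶜ : Finset V) ⊆ bpActive G L r (Lᶜ : Finset V).card ↔ StronglyRRobust G L r :=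
  stmt_8_general G L r
end
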